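/- Fix μ ∈ ℝ and c ∈ ℝ with μ > c. The function σ ↦ P(μ, σ, c) is strictly decreasing on (0, ∞): if 0 < σ < σ' then P(μ, σ, c) > P(μ, σ', c). -/

import Mathlib

/-!
The factor `exp (-(2/σ²)(μ - c)(q - c))` turns the density of `N(μ, σ²)` into the density of
its mirror image `N(2c - μ, σ²)` about `c` (reflection principle). Hence `P(μ, σ, c)` is the
mass of `N(μ, σ²)` on `(c, ∞)` minus that of `N(2c - μ, σ²)` there, which after standardising
is `∫_{-t}^{t} φ` with `t = (μ - c)/σ`. This is strictly increasing in `t ≥ 0`, and `t`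
strictly decreases in `σ` when `μ > c`.
-/

open Real MeasureTheory Filter Topology

/-- Standard normal density φ(x) = exp(-x²/2)/√(2π). -/
noncomputable def stdPdf (x : ℝ) : ℝ := Real.exp (-(x ^ 2) / 2) / Real.sqrt (2 * Real.pi)

/-- Standard normal CDF Φ(x) = ∫_{-∞}^x φ(u) du. -/
noncomputable def stdCdf (x : ℝ) : ℝ := ∫ u in Set.Iio x, stdPdf u

/-- P(μ, σ, c): probability that an agent with prior N(μ, σ²) and link cost c
is never ostracized (Proposition 1). -/
noncomputable def Pstay (μ σ c : ℝ) : ℝ :=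
  ∫ q in Set.Ioi c, (1 - Real.exp (-(2 / σ ^ 2) * (μ - c) * (q - c))) * stdPdf ((q - μ) / σ) / σ

lemma stdPdf_pos (x : ℝ) : 0 < stdPdf x := by
  unfold stdPdf
  positivity

lemma continuous_stdPdf : Continuous stdPdf := by
  unfold stdPdf
  fun_prop

lemma integrable_stdPdf : Integrable stdPdf := by
  have h : stdPdf = fun x => (√(2 * π))⁻¹ * exp (-(1 / 2 : ℝ) * x ^ 2) := by
    funext x
    rw [stdPdf, div_eq_inv_mul]
    ring_nf
  rw [h]
  exact (integrable_exp_neg_mul_sq (by norm_num)).const_mul _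

lemma exp_mul_stdPdf_eq_stdPdf_reflect (μ c q : ℝ) {σ : ℝ} (hσ : σ ≠ 0) :
    exp (-(2 / σ ^ 2) * (μ - c) * (q - c)) * stdPdf ((q - μ) / σ)
      = stdPdf ((q - (2 * c - μ)) / σ) := by
  unfold stdPdf
  rw [mul_div_assoc', ← exp_add]
  congr 2
  field_simp
  ring

lemma setIntegral_Ioi_comp_sub_div {E : Type*} [NormedAddCommGroup E] [NormedSpace ℝ E]
    (g : ℝ → E) (m a : ℝ) {σ : ℝ} (hσ : 0 < σ) :
    ∫ q in Set.Ioi a, g ((q - m) / σ) = σ • ∫ x in Set.Ioi ((a - m) / σ), g x := by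
  have hpre : (fun q => (q - m) / σ) ⁻¹' Set.Ioi ((a - m) / σ) = Set.Ioi a := by
    ext q
    simp [div_lt_div_iff_of_pos_right hσ]
  set G := (Set.Ioi ((a - m) / σ)).indicator g
  calc ∫ q in Set.Ioi a, g ((q - m) / σ)
      = ∫ q, G ((q - m) / σ) := by
        rw [← integral_indicator measurableSet_Ioi, ← hpre]
        congr 1 with q
    _ = ∫ q, G (q / σ) := integral_sub_right_eq_self (fun q => G (q / σ)) m
    _ = σ • ∫ x in Set.Ioi ((a - m) / σ), g x := by
        rw [Measure.integral_comp_div, abs_of_pos hσ, integral_indicator measurableSet_Ioi]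

lemma setIntegral_Ioi_stdPdf_comp_sub_div (m a : ℝ) {σ : ℝ} (hσ : 0 < σ) :
    ∫ q in Set.Ioi a, stdPdf ((q - m) / σ) / σ = ∫ x in Set.Ioi ((a - m) / σ), stdPdf x := by
  rw [integral_div, setIntegral_Ioi_comp_sub_div stdPdf m a hσ, smul_eq_mul,
    mul_div_cancel_left₀ _ hσ.ne']

lemma Pstay_eq_intervalIntegral_stdPdf (μ c : ℝ) {σ : ℝ} (hσ : 0 < σ) :
    Pstay μ σ c = ∫ z in -((μ - c) / σ)..(μ - c) / σ, stdPdf z := by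
  have hdensity : ∀ m, Integrable fun q => stdPdf ((q - m) / σ) / σ := fun m =>
    ((integrable_stdPdf.comp_div hσ.ne').comp_sub_right m).div_const σ
  have hintegrand : ∀ q, (1 - exp (-(2 / σ ^ 2) * (μ - c) * (q - c))) * stdPdf ((q - μ) / σ) / σ
      = stdPdf ((q - μ) / σ) / σ - stdPdf ((q - (2 * c - μ)) / σ) / σ := fun q => by
    rw [← exp_mul_stdPdf_eq_stdPdf_reflect μ c q hσ.ne']
    ring
  rw [Pstay, funext hintegrand,
    integral_sub (hdensity μ).integrableOn (hdensity (2 * c - μ)).integrableOn,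
    setIntegral_Ioi_stdPdf_comp_sub_div μ c hσ,
    setIntegral_Ioi_stdPdf_comp_sub_div (2 * c - μ) c hσ,
    intervalIntegral.integral_Ioi_sub_Ioi' integrable_stdPdf.integrableOn
      integrable_stdPdf.integrableOn]
  congr 1 <;> ring

lemma strictMonoOn_intervalIntegral_neg_self {f : ℝ → ℝ} (hf : ∀ x, 0 < f x)
    (hfi : ∀ a b, IntervalIntegrable f volume a b) :
    StrictMonoOn (fun t => ∫ x in -t..t, f x) (Set.Ici 0) := by
  rintro s (hs : 0 ≤ s) t - hst
  have hleft : 0 ≤ ∫ x in -t..-s, f x :=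
    intervalIntegral.integral_nonneg (by linarith) fun x _ => (hf x).le
  have hright : 0 < ∫ x in s..t, f x :=
    intervalIntegral.intervalIntegral_pos_of_pos_on (hfi s t) (fun x _ => hf x) hst
  have hsplit : ∫ x in -t..t, f x
      = (∫ x in -t..-s, f x) + (∫ x in -s..s, f x) + ∫ x in s..t, f x := by
    rw [intervalIntegral.integral_add_adjacent_intervals (hfi _ _) (hfi _ _),
      intervalIntegral.integral_add_adjacent_intervals (hfi _ _) (hfi _ _)]
  dsimp only
  linarith

/-- P(μ, σ, c) is strictly decreasing in σ on (0, ∞), for μ > c. -/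
theorem stmt_2 (μ c : ℝ) (hμ : μ > c) (σ σ' : ℝ) (hσ : 0 < σ) (hσ' : σ < σ') :
    Pstay μ σ c > Pstay μ σ' c := by
  have hσ'_pos : 0 < σ' := hσ.trans hσ'
  have hμc : 0 < μ - c := sub_pos.mpr hμ
  rw [gt_iff_lt, Pstay_eq_intervalIntegral_stdPdf μ c hσ,
    Pstay_eq_intervalIntegral_stdPdf μ c hσ'_pos]
  exact strictMonoOn_intervalIntegral_neg_self stdPdf_pos
    (fun _ _ => continuous_stdPdf.intervalIntegrable _ _)
    (Set.mem_Ici.mpr (div_pos hμc hσ'_pos).le) (Set.mem_Ici.mpr (div_pos hμc hσ).le)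
    (div_lt_div_of_pos_left hμc hσ hσ')
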